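/- arXiv:2412.20764 — 2 statements merged into one kernel-verified Lean document; each statement's English description precedes it below -/
import Mathlib

section
/- For any non-negative kernel k on I, a σ-finite measure μ on 𝓘 and all m, n ≥ 1 and s, t ∈ I with s ≤ t, the resolvent sequence satisfies the semigroup identity R_{k,μ,m+n}(t,s) = ∫_{[s,t]} R_{k,μ,m}(t,s̃) R_{k,μ,n}(s̃,s) μ(ds̃). -/
open MeasureTheory ENNReal

/-- The resolvent sequence of a non-negative kernel `k` with respect to a measure `μ`:
`res r μ k 0 = k` corresponds to `R_{k,μ,1}` and
`res r μ k (n+1) t s = ∫_{[s,t]} k t u * res r μ k n u s ∂μ` corresponds to `R_{k,μ,n+2}`. -/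
noncomputable def res {I : Type*} [MeasurableSpace I] (r : I → I → Prop)
    (μ : Measure I) (k : I → I → ℝ≥0∞) : ℕ → I → I → ℝ≥0∞
  | 0, t, s => k t s
  | n + 1, t, s => ∫⁻ u in {u : I | r s u ∧ r u t}, k t u * res r μ k n u s ∂μ

/-!
Write `(f ⋆ g)(t, s) = ∫_{[s,t]} f(t, u) g(u, s) μ(du)` (`kernelComp`). Then `R_{n+1} = k ⋆ R_n`,
so the semigroup identity is the associativity of `⋆`, which is Tonelli's theorem on the simplex
`s ≤ v ≤ u ≤ t`. Kernels only enter through their values on the triangle `u ≤ t`, so each may be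
replaced by its extension by zero, which is measurable on `I × I`; measurability then passes from
`k` to every `R_n`.
-/

open Set Function

section KernelComposition

variable {I : Type*} [Preorder I]

noncomputable def triangularPart (f : I → I → ℝ≥0∞) : I → I → ℝ≥0∞ :=
  curry ({q : I × I | q.2 ≤ q.1}.indicator (uncurry f))

lemma triangularPart_of_le (f : I → I → ℝ≥0∞) {t u : I} (h : u ≤ t) :
    triangularPart f t u = f t u :=
  indicator_of_mem (show (t, u) ∈ {q : I × I | q.2 ≤ q.1} from h) _

variable [MeasurableSpace I]

noncomputable def kernelComp (μ : Measure I) (f g : I → I → ℝ≥0∞) (t s : I) : ℝ≥0∞ :=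
  ∫⁻ u in Icc s t, f t u * g u s ∂μ

lemma measurable_triangularPart_of_measurable_subtype
    (hΔ : MeasurableSet {q : I × I | q.2 ≤ q.1}) {k : I → I → ℝ≥0∞}
    (hk : Measurable fun q : {q : I × I // q.2 ≤ q.1} => k q.1.1 q.1.2) :
    Measurable (uncurry (triangularPart k)) := by
  refine measurable_of_restrict_of_restrict_compl hΔ ?_ ?_
  · have h_restrict : {q : I × I | q.2 ≤ q.1}.domRestrict (uncurry (triangularPart k))
        = fun q => k q.1.1 q.1.2 := funext fun q => indicator_of_mem q.2 _
    rwa [h_restrict]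
  · convert (measurable_const (a := (0 : ℝ≥0∞))) using 1
    funext q
    exact indicator_of_notMem q.2 _

lemma measurableSet_Icc_of_measurableSet_le (hΔ : MeasurableSet {q : I × I | q.2 ≤ q.1})
    (s t : I) : MeasurableSet (Icc s t) :=
  (measurable_id.prodMk measurable_const hΔ).inter (measurable_const.prodMk measurable_id hΔ)

lemma kernelComp_congr (hΔ : MeasurableSet {q : I × I | q.2 ≤ q.1}) (μ : Measure I)
    {f f' g g' : I → I → ℝ≥0∞} (hf : ∀ t u, u ≤ t → f t u = f' t u)
    (hg : ∀ u s, s ≤ u → g u s = g' u s) :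
    kernelComp μ f g = kernelComp μ f' g' := by
  funext t s
  exact setLIntegral_congr_fun (measurableSet_Icc_of_measurableSet_le hΔ s t)
    fun u hu => by rw [hf t u hu.2, hg u s hu.1]

lemma setLIntegral_Icc_setLIntegral_Icc_comm (hΔ : MeasurableSet {q : I × I | q.2 ≤ q.1})
    (μ : Measure I) [SFinite μ] {F : I → I → ℝ≥0∞} (hF : Measurable (uncurry F)) (s t : I) :
    ∫⁻ u in Icc s t, ∫⁻ v in Icc s u, F u v ∂μ ∂μ
      = ∫⁻ v in Icc s t, ∫⁻ u in Icc v t, F u v ∂μ ∂μ := by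
  have hIcc := measurableSet_Icc_of_measurableSet_le hΔ
  set T : Set (I × I) := {p | s ≤ p.2 ∧ p.2 ≤ p.1 ∧ p.1 ≤ t}
  have hT : MeasurableSet T :=
    (measurable_snd.prodMk measurable_const hΔ).inter
      (hΔ.inter (measurable_const.prodMk measurable_fst hΔ))
  have h_outer : ∀ u, (Icc s t).indicator (fun u => ∫⁻ v in Icc s u, F u v ∂μ) u
      = ∫⁻ v, T.indicator (uncurry F) (u, v) ∂μ := by
    intro u
    by_cases hu : u ∈ Icc s t
    · rw [indicator_of_mem hu, ← lintegral_indicator (hIcc s u)]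
      refine lintegral_congr fun v => ?_
      classical
      simp only [indicator_apply, mem_Icc, T, mem_ofPred_eq, uncurry_apply_pair, hu.2, and_true]
    · rw [indicator_of_notMem hu, eq_comm]
      refine (lintegral_congr fun v => indicator_of_notMem ?_ _).trans lintegral_zero
      exact fun h => hu ⟨h.1.trans h.2.1, h.2.2⟩
  have h_inner : ∀ v, (Icc s t).indicator (fun v => ∫⁻ u in Icc v t, F u v ∂μ) v
      = ∫⁻ u, T.indicator (uncurry F) (u, v) ∂μ := by
    intro v
    by_cases hv : v ∈ Icc s t
    · rw [indicator_of_mem hv, ← lintegral_indicator (hIcc v t)]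
      refine lintegral_congr fun u => ?_
      classical
      simp only [indicator_apply, mem_Icc, T, mem_ofPred_eq, uncurry_apply_pair, hv.1, true_and]
    · rw [indicator_of_notMem hv, eq_comm]
      refine (lintegral_congr fun u => indicator_of_notMem ?_ _).trans lintegral_zero
      exact fun h => hv ⟨h.1, h.2.1.trans h.2.2⟩
  rw [← lintegral_indicator (hIcc s t), ← lintegral_indicator (hIcc s t),
    lintegral_congr h_outer, lintegral_congr h_inner]
  exact lintegral_lintegral_swap (hF.indicator hT).aemeasurable

lemma kernelComp_assoc_of_measurable (hΔ : MeasurableSet {q : I × I | q.2 ≤ q.1})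
    (μ : Measure I) [SFinite μ] {f g h : I → I → ℝ≥0∞} (hf : Measurable (uncurry f))
    (hg : Measurable (uncurry g)) (hh : Measurable (uncurry h)) :
    kernelComp μ f (kernelComp μ g h) = kernelComp μ (kernelComp μ f g) h := by
  funext t s
  have hF : Measurable (uncurry fun u v => f t u * (g u v * h v s)) :=
    (hf.comp (measurable_const.prodMk measurable_fst)).mul
      (hg.mul (hh.comp (measurable_snd.prodMk measurable_const)))
  calc kernelComp μ f (kernelComp μ g h) t s
      = ∫⁻ u in Icc s t, ∫⁻ v in Icc s u, f t u * (g u v * h v s) ∂μ ∂μ :=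
        lintegral_congr fun u => (lintegral_const_mul _
          (hg.of_uncurry_left.mul hh.of_uncurry_right)).symm
    _ = ∫⁻ v in Icc s t, ∫⁻ u in Icc v t, f t u * (g u v * h v s) ∂μ ∂μ :=
        setLIntegral_Icc_setLIntegral_Icc_comm hΔ μ hF s t
    _ = kernelComp μ (kernelComp μ f g) h t s := by
        refine lintegral_congr fun v => ?_
        simp_rw [← mul_assoc]
        exact lintegral_mul_const _ (hf.of_uncurry_left.mul hg.of_uncurry_right)

lemma measurable_uncurry_kernelComp_of_measurable (hΔ : MeasurableSet {q : I × I | q.2 ≤ q.1})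
    (μ : Measure I) [SFinite μ] {f g : I → I → ℝ≥0∞} (hf : Measurable (uncurry f))
    (hg : Measurable (uncurry g)) : Measurable (uncurry (kernelComp μ f g)) := by
  set T : Set ((I × I) × I) := {p | p.1.2 ≤ p.2 ∧ p.2 ≤ p.1.1}
  have hT : MeasurableSet T :=
    (measurable_snd.prodMk (measurable_snd.comp measurable_fst) hΔ).inter
      ((measurable_fst.comp measurable_fst).prodMk measurable_snd hΔ)
  have h_eq : uncurry (kernelComp μ f g)
      = fun q => ∫⁻ u, T.indicator (fun p => f p.1.1 p.2 * g p.2 p.1.2) (q, u) ∂μ :=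
    funext fun q => (lintegral_indicator (measurableSet_Icc_of_measurableSet_le hΔ q.2 q.1) _).symm
  rw [h_eq]
  exact (((hf.comp ((measurable_fst.comp measurable_fst).prodMk measurable_snd)).mul
    (hg.comp (measurable_snd.prodMk (measurable_snd.comp measurable_fst)))).indicator
      hT).lintegral_prod_right'

lemma measurable_uncurry_kernelComp (hΔ : MeasurableSet {q : I × I | q.2 ≤ q.1})
    (μ : Measure I) [SFinite μ] {f g : I → I → ℝ≥0∞} (hf : Measurable (uncurry (triangularPart f)))
    (hg : Measurable (uncurry (triangularPart g))) : Measurable (uncurry (kernelComp μ f g)) := by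
  rw [kernelComp_congr hΔ μ (fun _ _ h => (triangularPart_of_le f h).symm)
    (fun _ _ h => (triangularPart_of_le g h).symm)]
  exact measurable_uncurry_kernelComp_of_measurable hΔ μ hf hg

theorem kernelComp_assoc (hΔ : MeasurableSet {q : I × I | q.2 ≤ q.1})
    (μ : Measure I) [SFinite μ] {f g h : I → I → ℝ≥0∞}
    (hf : Measurable (uncurry (triangularPart f))) (hg : Measurable (uncurry (triangularPart g)))
    (hh : Measurable (uncurry (triangularPart h))) :
    kernelComp μ f (kernelComp μ g h) = kernelComp μ (kernelComp μ f g) h := by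
  have hf' : ∀ t u, u ≤ t → f t u = triangularPart f t u :=
    fun _ _ hut => (triangularPart_of_le f hut).symm
  have hg' : ∀ t u, u ≤ t → g t u = triangularPart g t u :=
    fun _ _ hut => (triangularPart_of_le g hut).symm
  have hh' : ∀ t u, u ≤ t → h t u = triangularPart h t u :=
    fun _ _ hut => (triangularPart_of_le h hut).symm
  rw [kernelComp_congr hΔ μ hg' hh', kernelComp_congr hΔ μ hf' hg',
    kernelComp_congr hΔ μ hf' (fun _ _ _ => rfl), kernelComp_congr hΔ μ (fun _ _ _ => rfl) hh']
  exact kernelComp_assoc_of_measurable hΔ μ hf hg hh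

end KernelComposition

section Resolvent

variable {I : Type*} [MeasurableSpace I] [Preorder I]

lemma res_succ (μ : Measure I) (k : I → I → ℝ≥0∞) (n : ℕ) :
    res (· ≤ ·) μ k (n + 1) = kernelComp μ k (res (· ≤ ·) μ k n) :=
  rfl

lemma measurable_triangularPart_res (hΔ : MeasurableSet {q : I × I | q.2 ≤ q.1})
    (μ : Measure I) [SFinite μ] {k : I → I → ℝ≥0∞} (hk : Measurable (uncurry (triangularPart k))) :
    ∀ n, Measurable (uncurry (triangularPart (res (· ≤ ·) μ k n)))
  | 0 => hk
  | n + 1 => by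
    rw [res_succ]
    exact (measurable_uncurry_kernelComp hΔ μ hk
      (measurable_triangularPart_res hΔ μ hk n)).indicator hΔ

theorem res_add_succ (hΔ : MeasurableSet {q : I × I | q.2 ≤ q.1})
    (μ : Measure I) [SFinite μ] {k : I → I → ℝ≥0∞} (hk : Measurable (uncurry (triangularPart k))) :
    ∀ m n, res (· ≤ ·) μ k (m + n + 1) = kernelComp μ (res (· ≤ ·) μ k m) (res (· ≤ ·) μ k n)
  | 0, n => by rw [zero_add]; rfl
  | m + 1, n => by
    rw [add_right_comm m 1 n, res_succ, res_add_succ hΔ μ hk m n, res_succ]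
    exact kernelComp_assoc hΔ μ hk (measurable_triangularPart_res hΔ μ hk m)
      (measurable_triangularPart_res hΔ μ hk n)

end Resolvent

/-- **Semigroup identity for resolvent sequences**: for all `m, n ≥ 1` (here appearing
as `m + 1` and `n + 1`, i.e. `res … m = R_{·,m+1}`) and all `s ≤ t`,
`R_{k,μ,m+n}(t,s) = ∫_{[s,t]} R_{k,μ,m}(t,u) R_{k,μ,n}(u,s) μ(du)`. -/
theorem resolvent_semigroup {I : Type*} [MeasurableSpace I] [Preorder I]
    (hΔ : MeasurableSet {q : I × I | q.2 ≤ q.1})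
    (μ : Measure I) [SigmaFinite μ]
    (k : I → I → ℝ≥0∞)
    (hk : Measurable fun q : {q : I × I // q.2 ≤ q.1} => k q.1.1 q.1.2) :
    ∀ m n : ℕ, ∀ s t : I, s ≤ t →
      res (· ≤ ·) μ k (m + n + 1) t s
        = ∫⁻ u in {u : I | s ≤ u ∧ u ≤ t},
            res (· ≤ ·) μ k m t u * res (· ≤ ·) μ k n u s ∂μ := by
  intro m n s t _
  exact congrFun (congrFun (res_add_succ hΔ μ
    (measurable_triangularPart_of_measurable_subtype hΔ hk) m n) t) s
end

section
/- Assume condition (C.1) holds, and suppose that lim_{n→∞} ∫_{I(t)} R_{λ^p,μ,n}(t,s) Λ(s,x,x̃)^p μ(ds) = 0 for every t ∈ I and all x, x̃ in the image Ψ(X). Then Ψ admits at most one fixed point, i.e. there is at most one x ∈ X with Ψ(x) = x. -/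
/-! For fixed points `x, y` put `D t = d_t(x, y)^p` and `L t = Λ(t, x, y)^p ≤ D t`.
Condition (C.1) gives the Volterra inequality `D t ≤ ∫_{I(t)} λ(t,s)^p L s μ(ds)`. Bounding `L` by
`D` under the integral, substituting the inequality into itself and exchanging the order of
integration over `{u ≤ s ≤ t}` (Tonelli) gives `D t ≤ ∫_{I(t)} R_{λ^p,μ,n}(t,s) L s μ(ds)` for
every `n`. The right-hand side tends to `0`, so `d_t(x, y) = 0` for all `t`, i.e. `x = y`. -/

open MeasureTheory ENNReal Filter

open Set Function

section Triangle

variable {I : Type*} [MeasurableSpace I] [Preorder I]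

theorem measurableSet_le_of_measurableSet_triangle
    (hΔ : MeasurableSet {q : I × I | q.2 ≤ q.1}) {α : Type*} [MeasurableSpace α]
    {f g : α → I} (hf : Measurable f) (hg : Measurable g) : MeasurableSet {a | f a ≤ g a} :=
  hΔ.preimage (hg.prodMk hf)

variable (μ : Measure I)

theorem res_congr_of_le (hΔ : MeasurableSet {q : I × I | q.2 ≤ q.1}) {k k' : I → I → ℝ≥0∞}
    (hk : ∀ t s, s ≤ t → k t s = k' t s) (n : ℕ) {t s : I} (hst : s ≤ t) :
    res (· ≤ ·) μ k n t s = res (· ≤ ·) μ k' n t s := by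
  induction n generalizing t s with
  | zero => exact hk t s hst
  | succ n ih =>
    refine setLIntegral_congr_fun ?_ fun u hu => ?_
    · exact (measurableSet_le_of_measurableSet_triangle hΔ measurable_const measurable_id).inter
        (measurableSet_le_of_measurableSet_triangle hΔ measurable_id measurable_const)
    · simp only [hk t u hu.2, ih hu.1]

theorem measurable_res [SFinite μ] (hΔ : MeasurableSet {q : I × I | q.2 ≤ q.1})
    {k : I → I → ℝ≥0∞} (hk : Measurable (uncurry k)) (n : ℕ) :
    Measurable (uncurry (res (· ≤ ·) μ k n)) := by
  induction n with
  | zero => exact hk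
  | succ n ih =>
    have hS : MeasurableSet {r : (I × I) × I | r.1.2 ≤ r.2 ∧ r.2 ≤ r.1.1} :=
      (measurableSet_le_of_measurableSet_triangle hΔ measurable_fst.snd measurable_snd).inter
        (measurableSet_le_of_measurableSet_triangle hΔ measurable_snd measurable_fst.fst)
    have hf : Measurable fun r : (I × I) × I => k r.1.1 r.2 * res (· ≤ ·) μ k n r.2 r.1.2 :=
      (hk.comp (measurable_fst.fst.prodMk measurable_snd)).mul
        (ih.comp (measurable_snd.prodMk measurable_fst.snd))
    convert (hf.indicator hS).lintegral_prod_right' (ν := μ) using 2 with q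
    exact (lintegral_indicator (hS.preimage measurable_prodMk_left) _).symm

theorem lintegral_Iic_lintegral_Iic_swap [SFinite μ] (hΔ : MeasurableSet {q : I × I | q.2 ≤ q.1})
    {g : I → I → ℝ≥0∞} (hg : Measurable (uncurry g)) (t : I) :
    ∫⁻ s in Iic t, ∫⁻ u in Iic s, g s u ∂μ ∂μ = ∫⁻ u in Iic t, ∫⁻ s in Icc u t, g s u ∂μ ∂μ := by
  have hIic (s : I) : MeasurableSet (Iic s) :=
    measurableSet_le_of_measurableSet_triangle hΔ measurable_id measurable_const
  have hIcc (u : I) : MeasurableSet (Icc u t) :=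
    (measurableSet_le_of_measurableSet_triangle hΔ measurable_const measurable_id).inter (hIic t)
  set T := {q : I × I | q.2 ≤ q.1 ∧ q.1 ≤ t}
  have hT : MeasurableSet T :=
    hΔ.inter (measurableSet_le_of_measurableSet_triangle hΔ measurable_fst measurable_const)
  calc ∫⁻ s in Iic t, ∫⁻ u in Iic s, g s u ∂μ ∂μ
      = ∫⁻ s, ∫⁻ u, T.indicator (uncurry g) (s, u) ∂μ ∂μ := by
        rw [← lintegral_indicator (hIic t)]
        congr 1 with s
        by_cases hs : s ≤ t
        · rw [indicator_of_mem (mem_Iic.2 hs), ← lintegral_indicator (hIic s)]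
          congr 1 with u
          by_cases hu : u ≤ s <;> simp [indicator, T, hu, hs]
        · simp [indicator, T, hs]
    _ = ∫⁻ u, ∫⁻ s, T.indicator (uncurry g) (s, u) ∂μ ∂μ :=
        lintegral_lintegral_swap (hg.indicator hT).aemeasurable
    _ = ∫⁻ u in Iic t, ∫⁻ s in Icc u t, g s u ∂μ ∂μ := by
        rw [← lintegral_indicator (hIic t)]
        congr 1 with u
        by_cases hu : u ≤ t
        · rw [indicator_of_mem (mem_Iic.2 hu), ← lintegral_indicator (hIcc u)]
          rfl
        · have hT_u (s : I) : (s, u) ∉ T := fun h => hu (h.1.trans h.2)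
          simp [indicator_of_notMem (hT_u _), hu]

theorem setLIntegral_mul_setLIntegral_res [SFinite μ]
    (hΔ : MeasurableSet {q : I × I | q.2 ≤ q.1}) {k : I → I → ℝ≥0∞} (hk : Measurable (uncurry k))
    {L : I → ℝ≥0∞} (hL : Measurable L) (n : ℕ) (t : I) :
    ∫⁻ s in Iic t, k t s * ∫⁻ u in Iic s, res (· ≤ ·) μ k n s u * L u ∂μ ∂μ =
      ∫⁻ u in Iic t, res (· ≤ ·) μ k (n + 1) t u * L u ∂μ := by
  have hR := measurable_res μ hΔ hk n
  calc ∫⁻ s in Iic t, k t s * ∫⁻ u in Iic s, res (· ≤ ·) μ k n s u * L u ∂μ ∂μ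
      = ∫⁻ s in Iic t, ∫⁻ u in Iic s, k t s * (res (· ≤ ·) μ k n s u * L u) ∂μ ∂μ := by
        refine lintegral_congr fun s => (lintegral_const_mul _ ?_).symm
        exact (hR.comp measurable_prodMk_left).mul hL
    _ = ∫⁻ u in Iic t, ∫⁻ s in Icc u t, k t s * (res (· ≤ ·) μ k n s u * L u) ∂μ ∂μ :=
        lintegral_Iic_lintegral_Iic_swap μ hΔ
          (g := fun s u => k t s * (res (· ≤ ·) μ k n s u * L u))
          ((hk.comp (measurable_const.prodMk measurable_fst)).mul
            (hR.mul (hL.comp measurable_snd))) t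
    _ = ∫⁻ u in Iic t, res (· ≤ ·) μ k (n + 1) t u * L u ∂μ := by
        refine lintegral_congr fun u => ?_
        simp_rw [← mul_assoc]
        refine lintegral_mul_const _ ?_
        exact (hk.comp measurable_prodMk_left).mul (hR.comp (measurable_id.prodMk measurable_const))

theorem le_setLIntegral_res_mul [SFinite μ] (hΔ : MeasurableSet {q : I × I | q.2 ≤ q.1})
    {k : I → I → ℝ≥0∞} (hk : Measurable (uncurry k)) {D L : I → ℝ≥0∞} (hL : Measurable L)
    (hLD : L ≤ D) (hD : ∀ t, D t ≤ ∫⁻ s in Iic t, k t s * L s ∂μ) (n : ℕ) (t : I) :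
    D t ≤ ∫⁻ s in Iic t, res (· ≤ ·) μ k n t s * L s ∂μ := by
  induction n generalizing t with
  | zero => exact hD t
  | succ n ih =>
    calc D t ≤ ∫⁻ s in Iic t, k t s * L s ∂μ := hD t
      _ ≤ ∫⁻ s in Iic t, k t s * ∫⁻ u in Iic s, res (· ≤ ·) μ k n s u * L u ∂μ ∂μ :=
        lintegral_mono fun s => by gcongr; exact (hLD s).trans (ih s)
      _ = ∫⁻ s in Iic t, res (· ≤ ·) μ k (n + 1) t s * L s ∂μ :=
        setLIntegral_mul_setLIntegral_res μ hΔ hk hL n t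

end Triangle

theorem uniqueness_of_fixed_points_general {I X : Type*} [MeasurableSpace I] [Preorder I]
    (hΔ : MeasurableSet {q : I × I | q.2 ≤ q.1})
    (d : I → X → X → ℝ≥0∞)
    (hd0 : ∀ x y : X, x = y ↔ ∀ t : I, d t x y = 0)
    (Ψ : X → X)
    (Λ : I → X → X → ℝ≥0∞) (hΛmeas : ∀ x y : X, Measurable fun t : I => Λ t x y)
    (μ : Measure I) [SigmaFinite μ]
    (p : ℝ) (hp : 1 ≤ p)
    (lam : I → I → ℝ≥0∞)
    (hlam : Measurable fun q : {q : I × I // q.2 ≤ q.1} => lam q.1.1 q.1.2)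
    (hC1a : ∀ (t : I) (x y : X),
      d t (Ψ x) (Ψ y) ≤ (∫⁻ s in {s : I | s ≤ t}, lam t s ^ p * Λ s x y ^ p ∂μ) ^ (1 / p))
    (hC1b : ∀ (t : I) (x y : X), Λ t x y ≤ d t x y)
    (hlim : ∀ (t : I) (x y : X),
      Tendsto (fun n : ℕ =>
          ∫⁻ s in {s : I | s ≤ t},
            res (· ≤ ·) μ (fun a b => lam a b ^ p) n t s * Λ s (Ψ x) (Ψ y) ^ p ∂μ)
        atTop (nhds 0)) :
    ∀ x y : X, Ψ x = x → Ψ y = y → x = y := by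
  intro x y hx hy
  have hp0 : 0 < p := zero_lt_one.trans_le hp
  -- `λ` is only measurable on the triangle, while Tonelli needs a jointly measurable kernel;
  -- the resolvent only sees the kernel on the triangle, so any measurable extension will do.
  obtain ⟨k, hk, hk_eq⟩ : ∃ k : I × I → ℝ≥0∞, Measurable k ∧
      k ∘ Subtype.val = fun q : {q : I × I // q.2 ≤ q.1} => lam q.1.1 q.1.2 ^ p :=
    (MeasurableEmbedding.subtype_coe hΔ).exists_measurable_extend (hlam.pow_const p)
      fun _ => inferInstance
  have hk_le (t s : I) (hst : s ≤ t) : curry k t s = lam t s ^ p := congrFun hk_eq ⟨(t, s), hst⟩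
  have hIic (t : I) : MeasurableSet (Iic t) :=
    measurableSet_le_of_measurableSet_triangle hΔ measurable_id measurable_const
  have hbase (t : I) : d t x y ^ p ≤ ∫⁻ s in Iic t, curry k t s * Λ s x y ^ p ∂μ := by
    rw [← ENNReal.le_rpow_inv_iff hp0, ← one_div, setLIntegral_congr_fun (hIic t)
      fun s hs => by rw [hk_le t s hs]]
    have h := hC1a t x y
    rwa [hx, hy] at h
  have hiter := le_setLIntegral_res_mul μ hΔ (by rwa [uncurry_curry]) ((hΛmeas x y).pow_const p)
    (fun s => ENNReal.rpow_le_rpow (hC1b s x y) hp0.le) hbase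
  have hlim_k (t : I) : Tendsto (fun n => ∫⁻ s in Iic t,
      res (· ≤ ·) μ (curry k) n t s * Λ s x y ^ p ∂μ) atTop (nhds 0) := by
    refine (hlim t x y).congr fun n => ?_
    rw [hx, hy]
    refine setLIntegral_congr_fun (hIic t) fun s hs => ?_
    rw [res_congr_of_le μ hΔ (fun t s hst => (hk_le t s hst).symm) n hs]
  refine (hd0 x y).2 fun t => (ENNReal.rpow_eq_zero_iff_of_pos hp0).1 ?_
  exact le_antisymm (ge_of_tendsto' (hlim_k t) (hiter · t)) zero_le

/-- **Uniqueness of fixed points** (Lemma 4 of the paper): under condition (C.1), if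
`∫_{I(t)} R_{λ^p,μ,n}(t,s) Λ(s,x,x̃)^p μ(ds) → 0` for every `t ∈ I` and all
`x, x̃ ∈ Ψ(X)`, then `Ψ` admits at most one fixed point
(the index is shifted by one: `res … n = R_{·,n+1}`). -/
theorem uniqueness_of_fixed_points {I X : Type*} [MeasurableSpace I] [Preorder I]
    [Nonempty X]
    (hΔ : MeasurableSet {q : I × I | q.2 ≤ q.1})
    (d : I → X → X → ℝ≥0∞)
    (hd0 : ∀ x y : X, x = y ↔ ∀ t : I, d t x y = 0)
    (hdmeas : ∀ x y : X, Measurable fun t : I => d t x y)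
    (Ψ : X → X)
    (Λ : I → X → X → ℝ≥0∞) (hΛmeas : ∀ x y : X, Measurable fun t : I => Λ t x y)
    (μ : Measure I) [SigmaFinite μ]
    (p : ℝ) (hp : 1 ≤ p)
    (lam : I → I → ℝ≥0∞)
    (hlam : Measurable fun q : {q : I × I // q.2 ≤ q.1} => lam q.1.1 q.1.2)
    (hC1a : ∀ (t : I) (x y : X),
      d t (Ψ x) (Ψ y) ≤ (∫⁻ s in {s : I | s ≤ t}, lam t s ^ p * Λ s x y ^ p ∂μ) ^ (1 / p))
    (hC1b : ∀ (t : I) (x y : X), Λ t x y ≤ d t x y)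
    (hlim : ∀ (t : I) (x y : X),
      Tendsto (fun n : ℕ =>
          ∫⁻ s in {s : I | s ≤ t},
            res (· ≤ ·) μ (fun a b => lam a b ^ p) n t s * Λ s (Ψ x) (Ψ y) ^ p ∂μ)
        atTop (nhds 0)) :
    ∀ x y : X, Ψ x = x → Ψ y = y → x = y :=
  uniqueness_of_fixed_points_general hΔ d hd0 Ψ Λ hΛmeas μ p hp lam hlam hC1a hC1b hlim
end
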